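/- arXiv:1306.1098 — 4 statements merged into one kernel-verified Lean document; each statement's English description precedes it below -/
import Mathlib

section
/- If (b_k)_{k≥0} is a sequence of complex numbers with lim_{k→∞} (|b_k| · k!)^{1/k} = 0, and a ≥ 0 is a real number, then the sequence c_t = Σ_{k=0}^∞ C(t+k, t) · (-1)^k · a^k · b_{k+t} is well-defined (the series converges absolutely) and satisfies lim_{t→∞} (|c_t| · t!)^{1/t} = 0. -/
/-!
For every `ε > 0` the hypothesis gives `‖b k‖ * k! ≤ C * ε ^ k` for all `k`. Since
`C(t+k, t) * t! = (t+k)! / k!`, the `k`-th term of `c_t`, multiplied by `t!`, is at most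
`C * ε ^ t * (|a| ε) ^ k / k!`; summing over `k` gives `‖c_t‖ * t! ≤ C * exp (|a| ε) * ε ^ t`,
whose `t`-th root tends to `ε`.
-/

open Filter Topology Nat

section RootDecay

variable {x : ℕ → ℝ}

lemma exists_le_mul_pow_of_tendsto_rpow_inv (hx : ∀ k, 0 ≤ x k)
    (h : Tendsto (fun k : ℕ => x k ^ (1 / (k : ℝ))) atTop (𝓝 0)) {ε : ℝ} (hε : 0 < ε) :
    ∃ C, ∀ k, x k ≤ C * ε ^ k := by
  have hev : ∀ᶠ k in atTop, x k / ε ^ k ≤ 1 := by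
    filter_upwards [h.eventually (gt_mem_nhds hε), eventually_ne_atTop 0] with k hk hk0
    rw [one_div, Real.rpow_inv_lt_iff_of_pos (hx k) hε.le (by positivity),
      Real.rpow_natCast] at hk
    exact (div_le_one (pow_pos hε k)).2 hk.le
  obtain ⟨C, hC⟩ := (isBoundedUnder_of_eventually_le hev).bddAbove_range
  exact ⟨C, fun k => (div_le_iff₀ (pow_pos hε k)).1 (hC (Set.mem_range_self k))⟩

lemma tendsto_rpow_inv_of_forall_le_mul_pow (hx : ∀ k, 0 ≤ x k)
    (h : ∀ ε > 0, ∃ C, ∀ k, x k ≤ C * ε ^ k) :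
    Tendsto (fun k : ℕ => x k ^ (1 / (k : ℝ))) atTop (𝓝 0) := by
  refine tendsto_order.2 ⟨fun _ hneg => .of_forall fun k => hneg.trans_le
    (Real.rpow_nonneg (hx k) _), fun ε hε => ?_⟩
  obtain ⟨C, hC⟩ := h (ε / 2) (by positivity)
  set C' := max C 1
  have hC'_pos : 0 < C' := lt_max_of_lt_right one_pos
  have hroot : Tendsto (fun k : ℕ => C' ^ (1 / (k : ℝ))) atTop (𝓝 1) := by
    simpa [Function.comp_def] using (Real.continuousAt_const_rpow hC'_pos.ne').tendsto.comp
      tendsto_one_div_atTop_nhds_zero_nat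
  filter_upwards [hroot.eventually_lt_const one_lt_two, eventually_ne_atTop 0] with k hk hk0
  calc x k ^ (1 / (k : ℝ))
      ≤ (C' * (ε / 2) ^ k) ^ (1 / (k : ℝ)) := by
        gcongr
        · exact hx k
        · exact (hC k).trans (by gcongr; exact le_max_left C 1)
    _ = C' ^ (1 / (k : ℝ)) * (ε / 2) := by
        rw [Real.mul_rpow hC'_pos.le (by positivity), one_div,
          Real.pow_rpow_inv_natCast (by positivity) hk0]
    _ < 2 * (ε / 2) := by gcongr
    _ = ε := by ring

end RootDecay

section ConjugatedCoeff

def conjugatedCoeffTerm (b : ℕ → ℂ) (z : ℂ) (t k : ℕ) : ℂ :=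
  ((t + k).choose t : ℂ) * (-1) ^ k * z ^ k * b (k + t)

variable {b : ℕ → ℂ} {z : ℂ}

lemma norm_conjugatedCoeffTerm_mul_factorial (t k : ℕ) :
    ‖conjugatedCoeffTerm b z t k‖ * t ! = ‖z‖ ^ k / k ! * (‖b (k + t)‖ * (k + t)!) := by
  have hchoose : ((t + k).choose t : ℝ) * k ! * t ! = (k + t)! := by
    rw [add_comm t k]; exact_mod_cast add_choose_mul_factorial_mul_factorial k t
  simp only [conjugatedCoeffTerm, norm_mul, norm_pow, norm_neg, norm_one,
    one_pow, Complex.norm_natCast, ← hchoose]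
  field_simp

lemma norm_conjugatedCoeffTerm_le {C ε : ℝ} (hC : ∀ k, ‖b k‖ * k ! ≤ C * ε ^ k) (t k : ℕ) :
    ‖conjugatedCoeffTerm b z t k‖ ≤ C * ε ^ t / t ! * ((‖z‖ * ε) ^ k / k !) :=
  calc ‖conjugatedCoeffTerm b z t k‖
      = ‖z‖ ^ k / k ! * (‖b (k + t)‖ * (k + t)!) / t ! := by
        rw [← norm_conjugatedCoeffTerm_mul_factorial, mul_div_cancel_right₀ _ (by positivity)]
    _ ≤ ‖z‖ ^ k / k ! * (C * ε ^ (k + t)) / t ! :=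
        div_le_div_of_nonneg_right (mul_le_mul_of_nonneg_left (hC _) (by positivity))
          (by positivity)
    _ = C * ε ^ t / t ! * ((‖z‖ * ε) ^ k / k !) := by ring

lemma summable_norm_conjugatedCoeffTerm {C ε : ℝ} (hC : ∀ k, ‖b k‖ * k ! ≤ C * ε ^ k)
    (t : ℕ) : Summable fun k => ‖conjugatedCoeffTerm b z t k‖ :=
  .of_nonneg_of_le (fun _ => norm_nonneg _) (norm_conjugatedCoeffTerm_le hC t)
    ((Real.summable_pow_div_factorial _).mul_left _)

lemma norm_tsum_conjugatedCoeffTerm_mul_factorial_le {C ε : ℝ}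
    (hC : ∀ k, ‖b k‖ * k ! ≤ C * ε ^ k) (t : ℕ) :
    ‖∑' k, conjugatedCoeffTerm b z t k‖ * t ! ≤ C * Real.exp (‖z‖ * ε) * ε ^ t := by
  have hsum : HasSum (fun k => C * ε ^ t / t ! * ((‖z‖ * ε) ^ k / k !))
      (C * ε ^ t / t ! * Real.exp (‖z‖ * ε)) := by
    rw [Real.exp_eq_exp_ℝ]
    exact (NormedSpace.expSeries_div_hasSum_exp (‖z‖ * ε)).mul_left (C * ε ^ t / t !)
  calc ‖∑' k, conjugatedCoeffTerm b z t k‖ * t !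
      ≤ C * ε ^ t / t ! * Real.exp (‖z‖ * ε) * t ! :=
        mul_le_mul_of_nonneg_right
          (tsum_of_norm_bounded hsum (norm_conjugatedCoeffTerm_le hC t)) (by positivity)
    _ = C * Real.exp (‖z‖ * ε) * ε ^ t := by field_simp

end ConjugatedCoeff

theorem conjugated_local_operator_coeffs_general (b : ℕ → ℂ) (a : ℝ)
    (hb : Tendsto (fun k : ℕ => (‖b k‖ * k.factorial) ^ (1 / (k : ℝ)))
      atTop (nhds 0)) :
    (∀ t : ℕ, Summable (fun k : ℕ =>
        ‖((t + k).choose t : ℂ) * (-1) ^ k * (a : ℂ) ^ k * b (k + t)‖)) ∧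
    Tendsto (fun t : ℕ =>
        (‖∑' k : ℕ, ((t + k).choose t : ℂ) * (-1) ^ k * (a : ℂ) ^ k * b (k + t)‖
          * t.factorial) ^ (1 / (t : ℝ)))
      atTop (nhds 0) := by
  have hb_nonneg : ∀ k, 0 ≤ ‖b k‖ * k ! := fun k => by positivity
  obtain ⟨C, hC⟩ := exists_le_mul_pow_of_tendsto_rpow_inv hb_nonneg hb one_pos
  refine ⟨summable_norm_conjugatedCoeffTerm hC,
    tendsto_rpow_inv_of_forall_le_mul_pow (fun t => by positivity) fun ε hε => ?_⟩
  obtain ⟨Cε, hCε⟩ := exists_le_mul_pow_of_tendsto_rpow_inv hb_nonneg hb hε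
  exact ⟨_, norm_tsum_conjugatedCoeffTerm_mul_factorial_le hCε⟩

theorem conjugated_local_operator_coeffs (b : ℕ → ℂ) (a : ℝ) (ha : 0 ≤ a)
    (hb : Tendsto (fun k : ℕ => (‖b k‖ * k.factorial) ^ (1 / (k : ℝ)))
      atTop (nhds 0)) :
    (∀ t : ℕ, Summable (fun k : ℕ =>
        ‖((t + k).choose t : ℂ) * (-1) ^ k * (a : ℂ) ^ k * b (k + t)‖)) ∧
    Tendsto (fun t : ℕ =>
        (‖∑' k : ℕ, ((t + k).choose t : ℂ) * (-1) ^ k * (a : ℂ) ^ k * b (k + t)‖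
          * t.factorial) ^ (1 / (t : ℝ)))
      atTop (nhds 0) :=
  conjugated_local_operator_coeffs_general b a hb
end

section
/- If (b_k) and (c_k) are sequences of complex numbers with lim_{k→∞} (|b_k|·k!)^{1/k} = 0 and lim_{k→∞} (|c_k|·k!)^{1/k} = 0, then their Cauchy product d_n = Σ_{k=0}^n b_k · c_{n-k} satisfies lim_{n→∞} (|d_n|·n!)^{1/n} = 0. -/
open Filter Finset Topology Asymptotics

/-! A sequence `a ≥ 0` satisfies `a k ^ (1 / k) → 0` exactly when `a k ≤ C_ε ε ^ k` for every
`ε > 0`. Multiplying the Cauchy product by `n!` turns it into a binomial convolution of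
`‖b k‖ k!` and `‖c k‖ k!`, and `∑ (n choose k) ε ^ k ε ^ (n - k) = (2ε) ^ n`, so bounds with
ratio `ε` for the two factors give a bound with ratio `2ε` for the product. -/

lemma exists_forall_le_mul_pow_of_tendsto_rpow_one_div {a : ℕ → ℝ} (ha : ∀ k, 0 ≤ a k)
    (h : Tendsto (fun k : ℕ => a k ^ (1 / (k : ℝ))) atTop (𝓝 0)) {ε : ℝ} (hε : 0 < ε) :
    ∃ C, ∀ k, a k ≤ C * ε ^ k := by
  have hev : ∀ᶠ k : ℕ in atTop, ‖a k‖ ≤ 1 * ‖ε ^ k‖ := by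
    filter_upwards [(tendsto_order.1 h).2 ε hε, eventually_ne_atTop 0] with k hk hk0
    rw [one_div, Real.rpow_inv_lt_iff_of_pos (ha k) hε.le (by positivity),
      Real.rpow_natCast] at hk
    rw [one_mul, Real.norm_of_nonneg (ha k), Real.norm_of_nonneg (by positivity)]
    exact hk.le
  have hO : a =O[cofinite] (ε ^ ·) := by
    rw [Nat.cofinite_eq_atTop]
    exact IsBigO.of_bound 1 hev
  obtain ⟨C, hC⟩ := (isBigO_cofinite_iff fun k hk => absurd hk (pow_ne_zero k hε.ne')).1 hO
  refine ⟨C, fun k => ?_⟩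
  simpa only [Real.norm_of_nonneg (ha k), Real.norm_of_nonneg (pow_nonneg hε.le k)] using hC k

lemma tendsto_rpow_one_div_of_forall_le_mul_pow {a : ℕ → ℝ} (ha : ∀ k, 0 ≤ a k)
    (h : ∀ ε > 0, ∃ C, ∀ k, a k ≤ C * ε ^ k) :
    Tendsto (fun k : ℕ => a k ^ (1 / (k : ℝ))) atTop (𝓝 0) := by
  refine tendsto_order.2 ⟨fun x hx => Eventually.of_forall fun k =>
    hx.trans_le (Real.rpow_nonneg (ha k) _), fun ε hε => ?_⟩
  obtain ⟨C, hC⟩ := h (ε / 2) (by positivity)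
  set C' := max C 1
  have hC' : 0 < C' := zero_lt_one.trans_le (le_max_right C 1)
  have hroot : Tendsto (fun k : ℕ => C' ^ (1 / (k : ℝ))) atTop (𝓝 1) := by
    simpa using tendsto_const_nhds.rpow tendsto_one_div_atTop_nhds_zero_nat (Or.inl hC'.ne')
  filter_upwards [(tendsto_order.1 hroot).2 2 one_lt_two, eventually_ne_atTop 0] with k hk hk0
  calc a k ^ (1 / (k : ℝ))
      ≤ (C' * (ε / 2) ^ k) ^ (1 / (k : ℝ)) := by
        gcongr
        · exact ha k
        · exact (hC k).trans (by gcongr; exact le_max_left C 1)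
    _ = C' ^ (1 / (k : ℝ)) * (ε / 2) := by
        rw [Real.mul_rpow hC'.le (by positivity), one_div,
          Real.pow_rpow_inv_natCast (by positivity) hk0]
    _ < 2 * (ε / 2) := by gcongr
    _ = ε := by ring

lemma tendsto_rpow_one_div_nhds_zero_iff {a : ℕ → ℝ} (ha : ∀ k, 0 ≤ a k) :
    Tendsto (fun k : ℕ => a k ^ (1 / (k : ℝ))) atTop (𝓝 0) ↔
      ∀ ε > 0, ∃ C, ∀ k, a k ≤ C * ε ^ k :=
  ⟨fun h _ hε => exists_forall_le_mul_pow_of_tendsto_rpow_one_div ha h hε,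
    tendsto_rpow_one_div_of_forall_le_mul_pow ha⟩

lemma norm_sum_range_mul_mul_factorial_le {R : Type*} [SeminormedRing R] (b c : ℕ → R) (n : ℕ) :
    ‖∑ k ∈ range (n + 1), b k * c (n - k)‖ * n.factorial ≤
      ∑ k ∈ range (n + 1),
        ‖b k‖ * k.factorial * (‖c (n - k)‖ * (n - k).factorial) * n.choose k := by
  refine (mul_le_mul_of_nonneg_right (norm_sum_le _ _) (by positivity)).trans ?_
  rw [sum_mul]
  refine sum_le_sum fun k hk => ?_
  have hkn : k ≤ n := Nat.lt_succ_iff.mp (mem_range.mp hk)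
  calc ‖b k * c (n - k)‖ * n.factorial ≤ ‖b k‖ * ‖c (n - k)‖ * n.factorial := by
        gcongr; exact norm_mul_le _ _
    _ = _ := by
        rw [← Nat.choose_mul_factorial_mul_factorial hkn]
        push_cast
        ring

lemma sum_range_mul_choose_le_of_le_mul_pow {a b : ℕ → ℝ} {A B ε : ℝ}
    (ha₀ : ∀ k, 0 ≤ a k) (hb₀ : ∀ k, 0 ≤ b k)
    (ha : ∀ k, a k ≤ A * ε ^ k) (hb : ∀ k, b k ≤ B * ε ^ k) (n : ℕ) :
    ∑ k ∈ range (n + 1), a k * b (n - k) * n.choose k ≤ A * B * (2 * ε) ^ n := by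
  calc ∑ k ∈ range (n + 1), a k * b (n - k) * n.choose k
      ≤ ∑ k ∈ range (n + 1), A * ε ^ k * (B * ε ^ (n - k)) * n.choose k := by
        refine sum_le_sum fun k _ => mul_le_mul_of_nonneg_right ?_ (Nat.cast_nonneg _)
        exact mul_le_mul (ha k) (hb _) (hb₀ _) ((ha₀ k).trans (ha k))
    _ = A * B * (ε + ε) ^ n := by
        rw [add_pow, mul_sum]
        exact sum_congr rfl fun k _ => by ring
    _ = A * B * (2 * ε) ^ n := by rw [← two_mul]

theorem cauchy_product_of_local_operators (b c : ℕ → ℂ)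
    (hb : Tendsto (fun k : ℕ => (‖b k‖ * k.factorial) ^ (1 / (k : ℝ)))
      atTop (nhds 0))
    (hc : Tendsto (fun k : ℕ => (‖c k‖ * k.factorial) ^ (1 / (k : ℝ)))
      atTop (nhds 0)) :
    Tendsto (fun n : ℕ =>
        (‖∑ k ∈ Finset.range (n + 1), b k * c (n - k)‖ * n.factorial)
          ^ (1 / (n : ℝ)))
      atTop (nhds 0) := by
  have h₀ {f : ℕ → ℂ} (k : ℕ) : 0 ≤ ‖f k‖ * k.factorial := by positivity
  rw [tendsto_rpow_one_div_nhds_zero_iff h₀] at hb hc ⊢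
  intro ε hε
  obtain ⟨A, hA⟩ := hb (ε / 2) (by positivity)
  obtain ⟨B, hB⟩ := hc (ε / 2) (by positivity)
  refine ⟨A * B, fun n => (norm_sum_range_mul_mul_factorial_le b c n).trans ?_⟩
  have := sum_range_mul_choose_le_of_le_mul_pow h₀ h₀ hA hB n
  rwa [mul_div_cancel₀ ε two_ne_zero] at this
end

section
/- Let (L_p)_{p≥1} be a sequence of positive reals decreasing to 0. Then the infinite product P(ζ) = Π_{p=1}^∞ (1 − (L_p²/p²)·ζ²) converges locally uniformly on ℂ and defines an entire function of infra-exponential growth: for every ε > 0 there is C_ε > 0 with |P(ζ)| ≤ C_ε e^{ε|ζ|} for all ζ ∈ ℂ. -/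
/-!
Each factor is `1 - a_p ζ²` with `‖a_p‖ = L_{p+1}² / (p+1)²` summable, so the partial products
converge uniformly on compact sets and the limit is entire. For the growth bound put `δ = ε / π`.
In every factor `L_p` may be replaced by `δ` at the cost of a constant `max 1 (L_p² / δ²)`, which
is `1` for all but finitely many `p` since `L_p → 0`. What remains is bounded by `∏ (1 + δ² r² / p²) = sinh (π δ r) / (π δ r) ≤ e ^ (π δ r + 1)`, Euler's product for
the sine evaluated at `i δ r`.
-/

open Filter Finset Real Topology

theorem Real.tendsto_euler_sinh_prod (x : ℝ) :
    Tendsto (fun n : ℕ => π * x * ∏ j ∈ range n, (1 + x ^ 2 / ((j : ℝ) + 1) ^ 2))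
      atTop (𝓝 (sinh (π * x))) := by
  have h := Complex.tendsto_euler_sin_prod (x * Complex.I)
  rw [← mul_assoc, Complex.sin_mul_I] at h
  convert! (Complex.continuous_im.tendsto _).comp h using 1
  · ext1 n
    have : ∏ j ∈ range n, (1 - ((x : ℂ) * Complex.I) ^ 2 / ((j : ℂ) + 1) ^ 2)
        = ((∏ j ∈ range n, (1 + x ^ 2 / ((j : ℝ) + 1) ^ 2) : ℝ) : ℂ) := by
      push_cast
      simp [mul_pow, neg_div]
    rw [Function.comp_apply, this, mul_right_comm _ Complex.I, Complex.mul_I_im]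
    norm_cast
  · rw [Complex.mul_I_im, ← Complex.ofReal_mul, Complex.sinh_ofReal_re]

theorem Real.mul_prod_one_add_sq_div_le_sinh {x : ℝ} (hx : 0 ≤ x) (n : ℕ) :
    π * x * ∏ j ∈ range n, (1 + x ^ 2 / ((j : ℝ) + 1) ^ 2) ≤ sinh (π * x) := by
  refine Monotone.ge_of_tendsto (monotone_nat_of_le_succ fun m => ?_)
    (tendsto_euler_sinh_prod x) n
  rw [prod_range_succ, ← mul_assoc]
  exact le_mul_of_one_le_right (by positivity) (le_add_of_nonneg_right (by positivity))

theorem Real.prod_one_add_sq_div_le_exp {x : ℝ} (hx : 0 ≤ x) (n : ℕ) :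
    ∏ j ∈ range n, (1 + x ^ 2 / ((j : ℝ) + 1) ^ 2) ≤ exp (π * x + 1) := by
  set y := max x π⁻¹
  have hπy : 1 ≤ π * y := by
    simpa [pi_ne_zero] using mul_le_mul_of_nonneg_left (le_max_right x π⁻¹) pi_pos.le
  calc ∏ j ∈ range n, (1 + x ^ 2 / ((j : ℝ) + 1) ^ 2)
      ≤ ∏ j ∈ range n, (1 + y ^ 2 / ((j : ℝ) + 1) ^ 2) := by
        gcongr
        exact le_max_left x π⁻¹
    _ ≤ π * y * ∏ j ∈ range n, (1 + y ^ 2 / ((j : ℝ) + 1) ^ 2) :=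
        le_mul_of_one_le_left (prod_nonneg fun _ _ => by positivity) hπy
    _ ≤ sinh (π * y) := mul_prod_one_add_sq_div_le_sinh (hx.trans (le_max_left _ _)) n
    _ ≤ exp (π * y) := by rw [sinh_eq]; linarith [exp_pos (π * y), exp_pos (-(π * y))]
    _ ≤ exp (π * x + 1) := by
        gcongr
        rw [mul_max_of_nonneg _ _ pi_pos.le, mul_inv_cancel₀ pi_ne_zero]
        exact max_le (by linarith) (by linarith [mul_nonneg pi_pos.le hx])

theorem exists_prod_one_add_sq_div_mul_sq_le_mul_exp {ℓ : ℕ → ℝ} (hℓ : Tendsto ℓ atTop (𝓝 0))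
    {ε : ℝ} (hε : 0 < ε) :
    ∃ C, 0 < C ∧ ∀ (n : ℕ) (r : ℝ), 0 ≤ r →
      ∏ p ∈ range n, (1 + ℓ p ^ 2 / ((p : ℝ) + 1) ^ 2 * r ^ 2) ≤ C * exp (ε * r) := by
  set δ := ε / π
  have hδ : 0 < δ := div_pos hε pi_pos
  obtain ⟨K, hK⟩ : ∃ K, ∀ p ≥ K, ℓ p ^ 2 ≤ δ ^ 2 := by
    have hδ2 : (0 : ℝ) ^ 2 < δ ^ 2 := by simpa using pow_pos hδ 2
    simpa using eventually_atTop.1 ((hℓ.pow 2).eventually (ge_mem_nhds hδ2))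
  set M : ℕ → ℝ := fun p => max 1 (ℓ p ^ 2 / δ ^ 2)
  have hM_one_le (p : ℕ) : 1 ≤ M p := le_max_left _ _
  have hM_eq_one {p : ℕ} (hp : K ≤ p) : M p = 1 :=
    max_eq_left ((div_le_one (by positivity)).2 (hK p hp))
  have hM_prod (n : ℕ) : ∏ p ∈ range n, M p ≤ ∏ p ∈ range K, M p :=
    calc ∏ p ∈ range n, M p ≤ ∏ p ∈ range n ∪ range K, M p :=
          prod_le_prod_of_subset_of_one_le subset_union_left (fun p _ => by positivity)
            fun p _ _ => hM_one_le p
      _ = ∏ p ∈ range K, M p :=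
          (prod_subset subset_union_right fun p _ hp => hM_eq_one (by simpa using hp)).symm
  have hfactor (p : ℕ) (r : ℝ) :
      1 + ℓ p ^ 2 / ((p : ℝ) + 1) ^ 2 * r ^ 2 ≤ M p * (1 + (δ * r) ^ 2 / ((p : ℝ) + 1) ^ 2) := by
    have hrw : ℓ p ^ 2 / ((p : ℝ) + 1) ^ 2 * r ^ 2
        = ℓ p ^ 2 / δ ^ 2 * ((δ * r) ^ 2 / ((p : ℝ) + 1) ^ 2) := by
      field_simp
    rw [hrw, mul_one_add]
    gcongr
    · exact hM_one_le p
    · exact le_max_right _ _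
  refine ⟨(∏ p ∈ range K, M p) * exp 1, by positivity, fun n r hr => ?_⟩
  calc ∏ p ∈ range n, (1 + ℓ p ^ 2 / ((p : ℝ) + 1) ^ 2 * r ^ 2)
      ≤ ∏ p ∈ range n, (M p * (1 + (δ * r) ^ 2 / ((p : ℝ) + 1) ^ 2)) :=
        prod_le_prod (fun p _ => by positivity) fun p _ => hfactor p r
    _ = (∏ p ∈ range n, M p) * ∏ p ∈ range n, (1 + (δ * r) ^ 2 / ((p : ℝ) + 1) ^ 2) :=
        prod_mul_distrib
    _ ≤ (∏ p ∈ range K, M p) * exp (π * (δ * r) + 1) :=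
        mul_le_mul (hM_prod n) (prod_one_add_sq_div_le_exp (by positivity) n)
          (prod_nonneg fun p _ => by positivity) (by positivity)
    _ = (∏ p ∈ range K, M p) * exp 1 * exp (ε * r) := by
        rw [← mul_assoc, mul_div_cancel₀ _ pi_ne_zero, exp_add]
        ring

theorem summable_sq_div_sq_of_tendsto {ℓ : ℕ → ℝ} {l : ℝ} (hℓ : Tendsto ℓ atTop (𝓝 l)) :
    Summable fun p : ℕ => ℓ p ^ 2 / ((p : ℝ) + 1) ^ 2 := by
  obtain ⟨B, hB⟩ := (hℓ.pow 2).bddAbove_range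
  have hsum : Summable fun p : ℕ => 1 / ((p : ℝ) + 1) ^ 2 := by
    simpa using (summable_nat_add_iff 1).2 (summable_one_div_nat_pow.2 one_lt_two)
  refine (hsum.mul_left B).of_nonneg_of_le (fun p => by positivity) fun p => ?_
  rw [mul_one_div]
  gcongr
  exact hB (Set.mem_range_self p)

theorem hasProdLocallyUniformly_one_sub_mul_sq {𝕜 : Type*} [NormedField 𝕜] [CompleteSpace 𝕜]
    [ProperSpace 𝕜] {a : ℕ → 𝕜} (ha : Summable fun p => ‖a p‖) :
    HasProdLocallyUniformly (fun p ζ => 1 - a p * ζ ^ 2) (fun ζ => ∏' p, (1 - a p * ζ ^ 2)) := by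
  refine hasProdLocallyUniformly_of_forall_compact fun K hK => ?_
  obtain ⟨R, hR⟩ := hK.isBounded.exists_norm_le
  simp only [sub_eq_add_neg]
  refine Summable.hasProdUniformlyOn_nat_one_add hK (ha.mul_right (R ^ 2))
    (Eventually.of_forall fun p ζ hζ => ?_) fun p => by fun_prop
  rw [norm_neg, norm_mul, norm_pow]
  gcongr
  exact hR ζ hζ

theorem norm_prod_one_sub_le {ι R : Type*} [NormedCommRing R] [NormOneClass R] (s : Finset ι)
    (z : ι → R) : ‖∏ i ∈ s, (1 - z i)‖ ≤ ∏ i ∈ s, (1 + ‖z i‖) :=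
  (s.norm_prod_le _).trans <| prod_le_prod (fun _ _ => norm_nonneg _) fun i _ =>
    (norm_sub_le _ _).trans_eq (by rw [norm_one])

theorem hyperfunction_operator_symbol_general (L : ℕ → ℝ)
    (hlim : Tendsto L atTop (nhds 0)) :
    ∃ P : ℂ → ℂ,
      TendstoLocallyUniformly
        (fun N : ℕ => fun ζ : ℂ =>
          ∏ p ∈ Finset.range N, (1 - ((L (p + 1) : ℂ) ^ 2 / ((p : ℂ) + 1) ^ 2) * ζ ^ 2))
        P atTop ∧
      Differentiable ℂ P ∧
      ∀ ε : ℝ, 0 < ε → ∃ C : ℝ, 0 < C ∧ ∀ ζ : ℂ,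
        ‖P ζ‖ ≤ C * Real.exp (ε * ‖ζ‖) := by
  have hℓ : Tendsto (fun p => L (p + 1)) atTop (𝓝 0) := hlim.comp (tendsto_add_atTop_nat 1)
  have hnorm (p : ℕ) :
      ‖(L (p + 1) : ℂ) ^ 2 / ((p : ℂ) + 1) ^ 2‖ = L (p + 1) ^ 2 / ((p : ℝ) + 1) ^ 2 := by
    rw [norm_div, norm_pow, norm_pow, Complex.norm_real, Real.norm_eq_abs, sq_abs]
    norm_cast
  have hconv := (hasProdLocallyUniformly_one_sub_mul_sq ((summable_sq_div_sq_of_tendsto hℓ).congr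
    fun p => (hnorm p).symm)).tendstoLocallyUniformly_finsetRange
  have hconv_univ := tendstoLocallyUniformlyOn_univ.2 hconv
  refine ⟨_, hconv, ?_, fun ε hε => ?_⟩
  · exact differentiableOn_univ.1 <| hconv_univ.differentiableOn
      (Eventually.of_forall fun N => by fun_prop) isOpen_univ
  obtain ⟨C, hC, hbound⟩ := exists_prod_one_add_sq_div_mul_sq_le_mul_exp hℓ hε
  refine ⟨C, hC, fun ζ => le_of_tendsto (hconv_univ.tendsto_at (Set.mem_univ ζ)).norm
    (Eventually.of_forall fun N => ?_)⟩
  calc _ ≤ _ := norm_prod_one_sub_le _ _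
    _ ≤ C * exp (ε * ‖ζ‖) := by
        simpa only [norm_mul, norm_pow, hnorm] using hbound N ‖ζ‖ (norm_nonneg _)

theorem hyperfunction_operator_symbol (L : ℕ → ℝ)
    (hpos : ∀ p : ℕ, 0 < L p) (hmono : Antitone L)
    (hlim : Tendsto L atTop (nhds 0)) :
    ∃ P : ℂ → ℂ,
      TendstoLocallyUniformly
        (fun N : ℕ => fun ζ : ℂ =>
          ∏ p ∈ Finset.range N, (1 - ((L (p + 1) : ℂ) ^ 2 / ((p : ℂ) + 1) ^ 2) * ζ ^ 2))
        P atTop ∧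
      Differentiable ℂ P ∧
      ∀ ε : ℝ, 0 < ε → ∃ C : ℝ, 0 < C ∧ ∀ ζ : ℂ,
        ‖P ζ‖ ≤ C * Real.exp (ε * ‖ζ‖) :=
  hyperfunction_operator_symbol_general L hlim
end

section
/- Let h₁ > 0 and h > 2h₁, and let φ, ψ : ℝ → ℂ be smooth with ‖φ‖_{h₁} < ∞ and ‖ψ‖_{h/2} < ∞, where ‖φ‖_h = sup_{n∈ℕ₀, x∈ℝ} |φ^{(n)}(x)|·e^{|x|/h}/(h^n n!). Then the truncated convolution (φ *₀ ψ)(x) = ∫₀ˣ φ(t)ψ(x−t) dt satisfies ‖φ *₀ ψ‖_h < ∞. -/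
open MeasureTheory intervalIntegral Set Metric Filter

/-- `‖φ‖ₕ < ∞` : the defining bound for the space 𝒫₌(𝔻). -/
def PBounded (h : ℝ) (φ : ℝ → ℂ) : Prop :=
  ∃ M : ℝ, ∀ (n : ℕ) (x : ℝ),
    ‖iteratedDeriv n φ x‖ * Real.exp (|x| / h) ≤ M * h ^ n * n.factorial

lemma uIoc_abs_le {a b t : ℝ} (ht : t ∈ Set.uIoc a b) :
    |t - a| ≤ |b - a| ∧ |b - t| ≤ |b - a| := by
  rcases le_total a b with hab | hab
  · rw [Set.uIoc_of_le hab] at ht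
    obtain ⟨h1, h2⟩ := ht
    rw [abs_of_nonneg (by linarith), abs_of_nonneg (by linarith), abs_of_nonneg (by linarith)]
    constructor <;> linarith
  · rw [Set.uIoc_of_ge hab] at ht
    obtain ⟨h1, h2⟩ := ht
    rw [abs_of_nonpos (by linarith), abs_of_nonpos (by linarith), abs_of_nonpos (by linarith)]
    constructor <;> linarith

lemma hasDerivAt_comp_sub (ψ : ℝ → ℂ) (hψd : Differentiable ℝ ψ) (t x : ℝ) :
    HasDerivAt (fun y => ψ (y - t)) (deriv ψ (x - t)) x := by
  have h1 := (hψd (x - t)).hasDerivAt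
  have h2 : HasDerivAt (fun y : ℝ => y - t) 1 x := (hasDerivAt_id x).sub_const t
  simpa [Function.comp_def] using h1.scomp x h2

lemma conv_hasDerivAt (φ ψ : ℝ → ℂ) (hφc : Continuous φ) (hψd : Differentiable ℝ ψ)
    (hψ'c : Continuous (deriv ψ)) (x₀ : ℝ) :
    HasDerivAt (fun x => ∫ t in (0:ℝ)..x, φ t * ψ (x - t))
      ((∫ t in (0:ℝ)..x₀, φ t * deriv ψ (x₀ - t)) + φ x₀ * ψ 0) x₀ := by
  have hψc : Continuous ψ := hψd.continuous
  have hcont : ∀ x : ℝ, Continuous fun t => φ t * ψ (x - t) :=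
    fun x => hφc.mul (hψc.comp (continuous_const.sub continuous_id))
  have hcont' : ∀ x : ℝ, Continuous fun t => φ t * deriv ψ (x - t) :=
    fun x => hφc.mul (hψ'c.comp (continuous_const.sub continuous_id))
  have hint : ∀ a b x : ℝ, IntervalIntegrable (fun t => φ t * ψ (x - t)) volume a b :=
    fun a b x => (hcont x).intervalIntegrable a b
  have hsplit : ∀ x : ℝ, (∫ t in (0:ℝ)..x, φ t * ψ (x - t)) =
      (∫ t in (0:ℝ)..x₀, φ t * ψ (x - t)) + ∫ t in x₀..x, φ t * ψ (x - t) :=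
    fun x => (intervalIntegral.integral_add_adjacent_intervals (hint 0 x₀ x) (hint x₀ x x)).symm
  have hA : HasDerivAt (fun x => ∫ t in (0:ℝ)..x₀, φ t * ψ (x - t))
      (∫ t in (0:ℝ)..x₀, φ t * deriv ψ (x₀ - t)) x₀ := by
    obtain ⟨C, hC⟩ := (isCompact_Icc (a := -(2*|x₀|+1)) (b := 2*|x₀|+1)).exists_bound_of_continuousOn
      hψ'c.continuousOn
    refine (intervalIntegral.hasDerivAt_integral_of_dominated_loc_of_deriv_le
      (F := fun x t => φ t * ψ (x - t)) (F' := fun x t => φ t * deriv ψ (x - t))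
      (bound := fun t => ‖φ t‖ * C) (Metric.ball_mem_nhds x₀ one_pos)
      (Eventually.of_forall fun x => (hcont x).aestronglyMeasurable)
      (hint 0 x₀ x₀) ((hcont' x₀).aestronglyMeasurable)
      (Eventually.of_forall ?_) ((hφc.norm.mul continuous_const).intervalIntegrable 0 x₀)
      (Eventually.of_forall ?_)).2
    · intro t ht x hx
      rw [norm_mul]
      refine mul_le_mul_of_nonneg_left (hC _ ?_) (norm_nonneg _)
      have h1 : |t| ≤ |x₀| := by simpa using (uIoc_abs_le ht).1
      have h2 : |x - x₀| < 1 := by simpa [Real.dist_eq] using mem_ball.1 hx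
      have : |x - t| ≤ 2*|x₀| + 1 := by
        have h3 : |x - t| ≤ |x - x₀| + |x₀ - t| := abs_sub_le x x₀ t
        have h4 : |x₀ - t| ≤ |x₀| + |t| := abs_sub x₀ t
        linarith
      rw [Set.mem_Icc]
      constructor <;> [linarith [abs_le.1 this]; linarith [(abs_le.1 this).2]]
    · intro t ht x hx
      exact (hasDerivAt_comp_sub ψ hψd t x).const_mul (φ t)
  have hB : HasDerivAt (fun x => ∫ t in x₀..x, φ t * ψ (x - t)) (φ x₀ * ψ 0) x₀ := by
    rw [hasDerivAt_iff_isLittleO, Asymptotics.isLittleO_iff]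
    intro c hc
    have hgc : ContinuousAt (fun p : ℝ × ℝ => φ p.1 * ψ p.2 - φ x₀ * ψ 0) (x₀, 0) :=
      ((hφc.comp continuous_fst).mul (hψc.comp continuous_snd)).continuousAt.sub
        continuousAt_const
    rw [Metric.continuousAt_iff] at hgc
    obtain ⟨δ, hδ, hδ'⟩ := hgc c hc
    filter_upwards [Metric.ball_mem_nhds x₀ hδ] with x hx
    have hxδ : |x - x₀| < δ := by simpa [Real.dist_eq] using mem_ball.1 hx
    have key : ∀ t ∈ Set.uIoc x₀ x, ‖φ t * ψ (x - t) - φ x₀ * ψ 0‖ ≤ c := by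
      intro t ht
      obtain ⟨h1, h2⟩ := uIoc_abs_le ht
      have : dist ((t, x - t) : ℝ × ℝ) (x₀, 0) < δ := by
        rw [Prod.dist_eq]
        simp only [Real.dist_eq, sub_zero]
        exact max_lt (lt_of_le_of_lt h1 hxδ) (lt_of_le_of_lt h2 hxδ)
      have := hδ' this
      simp only [sub_self, dist_eq_norm, sub_zero] at this
      simpa using this.le
    calc ‖(∫ t in x₀..x, φ t * ψ (x - t)) - (∫ t in x₀..x₀, φ t * ψ (x₀ - t)) -
            (x - x₀) • (φ x₀ * ψ 0)‖
        = ‖∫ t in x₀..x, (φ t * ψ (x - t) - φ x₀ * ψ 0)‖ := by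
          rw [intervalIntegral.integral_same, sub_zero,
            intervalIntegral.integral_sub (hint x₀ x x) (intervalIntegrable_const),
            intervalIntegral.integral_const]
      _ ≤ c * |x - x₀| := intervalIntegral.norm_integral_le_of_norm_le_const key
      _ = c * ‖x - x₀‖ := by rw [Real.norm_eq_abs]
  exact ((hA.add hB).congr_of_eventuallyEq (Eventually.of_forall hsplit))

lemma conv_iteratedDeriv (φ ψ : ℝ → ℂ) (hφs : ContDiff ℝ (⊤ : ℕ∞) φ) (hψs : ContDiff ℝ (⊤ : ℕ∞) ψ) (n : ℕ) :
    iteratedDeriv n (fun x => ∫ t in (0:ℝ)..x, φ t * ψ (x - t)) = fun x =>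
      (∑ j ∈ Finset.range n, iteratedDeriv (n - 1 - j) φ x * iteratedDeriv j ψ 0) +
        ∫ t in (0:ℝ)..x, φ t * iteratedDeriv n ψ (x - t) := by
  induction n with
  | zero => simp
  | succ n ih =>
    rw [iteratedDeriv_succ, ih]
    funext x
    have hφc : Continuous φ := hφs.continuous
    have hdA : HasDerivAt
        (fun x => ∑ j ∈ Finset.range n, iteratedDeriv (n-1-j) φ x * iteratedDeriv j ψ 0)
        (∑ j ∈ Finset.range n, iteratedDeriv (n-j) φ x * iteratedDeriv j ψ 0) x := by
      apply HasDerivAt.fun_sum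
      intro j hj
      have hjn : j < n := Finset.mem_range.1 hj
      have hk : n - 1 - j + 1 = n - j := by omega
      have hd : HasDerivAt (iteratedDeriv (n-1-j) φ) (iteratedDeriv (n-j) φ x) x := by
        have hdiff := ((hφs.differentiable_iteratedDeriv (n-1-j)
          (WithTop.coe_lt_coe.2 (ENat.coe_lt_top (n-1-j)))).differentiableAt (x := x)).hasDerivAt
        rw [← hk, iteratedDeriv_succ]
        exact hdiff
      exact hd.mul_const _
    have hdB : HasDerivAt (fun x => ∫ t in (0:ℝ)..x, φ t * iteratedDeriv n ψ (x - t))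
        ((∫ t in (0:ℝ)..x, φ t * deriv (iteratedDeriv n ψ) (x - t)) +
          φ x * iteratedDeriv n ψ 0) x := by
      refine conv_hasDerivAt φ (iteratedDeriv n ψ) hφc
        (hψs.differentiable_iteratedDeriv n (by exact_mod_cast ENat.coe_lt_top n)) ?_ x
      rw [← iteratedDeriv_succ]
      exact hψs.continuous_iteratedDeriv (n+1) (by exact_mod_cast le_top)
    rw [(hdA.fun_add hdB).deriv]
    rw [Finset.sum_range_succ]
    simp only [Nat.add_sub_cancel, iteratedDeriv_zero, ← iteratedDeriv_succ, Nat.sub_self]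
    ring

theorem truncated_convolution_bounded (h₁ h : ℝ) (hh₁ : 0 < h₁) (hh : 2 * h₁ < h)
    (φ ψ : ℝ → ℂ) (hφs : ContDiff ℝ (⊤ : ℕ∞) φ) (hψs : ContDiff ℝ (⊤ : ℕ∞) ψ)
    (hφ : PBounded h₁ φ) (hψ : PBounded (h / 2) ψ) :
    PBounded h (fun x => ∫ t in (0 : ℝ)..x, φ t * ψ (x - t)) := by
  obtain ⟨M₁, hM₁⟩ := hφ
  obtain ⟨M₂, hM₂⟩ := hψ
  have h0 : (0:ℝ) < h := by linarith
  have hne : h ≠ 0 := ne_of_gt h0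
  have hM₁0 : 0 ≤ M₁ := le_trans (norm_nonneg (φ 0)) (by simpa using hM₁ 0 0)
  have hM₂0 : 0 ≤ M₂ := le_trans (norm_nonneg (ψ 0)) (by simpa using hM₂ 0 0)
  have hA : (0:ℝ) ≤ M₁ * M₂ := mul_nonneg hM₁0 hM₂0
  have hφb : ∀ (k:ℕ) (y:ℝ), ‖iteratedDeriv k φ y‖ ≤
      M₁ * h₁^k * (k.factorial:ℝ) * Real.exp (-(|y|/h₁)) := by
    intro k y
    have h2 := (le_div_iff₀ (Real.exp_pos (|y|/h₁))).2 (hM₁ k y)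
    rw [Real.exp_neg, ← div_eq_mul_inv]
    exact h2
  have hψb : ∀ (k:ℕ) (y:ℝ), ‖iteratedDeriv k ψ y‖ ≤
      M₂ * (h/2)^k * (k.factorial:ℝ) * Real.exp (-(|y|/(h/2))) := by
    intro k y
    have h2 := (le_div_iff₀ (Real.exp_pos (|y|/(h/2)))).2 (hM₂ k y)
    rw [Real.exp_neg, ← div_eq_mul_inv]
    exact h2
  refine ⟨M₁ * M₂ * (h + 1/h), fun n x => ?_⟩
  have hform := congrFun (conv_iteratedDeriv φ ψ hφs hψs n) x
  rw [hform]
  show ‖(∑ j ∈ Finset.range n, iteratedDeriv (n-1-j) φ x * iteratedDeriv j ψ 0) +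
      ∫ t in (0:ℝ)..x, φ t * iteratedDeriv n ψ (x - t)‖ * Real.exp (|x|/h) ≤ _
  set E := Real.exp (|x|/h) with hE
  have hE0 : (0:ℝ) ≤ E := Real.exp_nonneg _
  have eE : Real.exp (-(|x|/h)) * E = 1 := by rw [hE, ← Real.exp_add]; simp
  -- per-term bound for the sum
  have hterm : ∀ j ∈ Finset.range n, ‖iteratedDeriv (n-1-j) φ x * iteratedDeriv j ψ 0‖ ≤
      M₁ * M₂ * ((h/2)^(n-1) * ((n-1).factorial:ℝ)) * Real.exp (-(|x|/h)) := by
    intro j hj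
    have hjn : j < n := Finset.mem_range.1 hj
    have hkj : (n-1-j) + j = n-1 := by omega
    rw [norm_mul]
    have b1 := hφb (n-1-j) x
    have b2 := hψb j 0
    have hexp1 : Real.exp (-(|x|/h₁)) ≤ Real.exp (-(|x|/h)) := by
      apply Real.exp_le_exp.2
      apply neg_le_neg
      apply div_le_div_of_nonneg_left (abs_nonneg x) hh₁ (by linarith)
    have hpk : h₁^(n-1-j) ≤ (h/2)^(n-1-j) := pow_le_pow_left₀ hh₁.le (by linarith) _
    have hfac : ((n-1-j).factorial : ℝ) * (j.factorial:ℝ) ≤ ((n-1).factorial:ℝ) := by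
      rw [← Nat.cast_mul]
      exact_mod_cast Nat.le_of_dvd (n-1).factorial_pos
        (by simpa [hkj] using Nat.factorial_mul_factorial_dvd_factorial_add (n-1-j) j)
    calc ‖iteratedDeriv (n-1-j) φ x‖ * ‖iteratedDeriv j ψ 0‖
        ≤ (M₁ * h₁^(n-1-j) * ((n-1-j).factorial:ℝ) * Real.exp (-(|x|/h₁))) *
          (M₂ * (h/2)^j * (j.factorial:ℝ) * Real.exp (-(|(0:ℝ)|/(h/2)))) :=
          mul_le_mul b1 b2 (norm_nonneg _) (by positivity)
      _ = (M₁ * M₂) * ((h₁^(n-1-j) * (h/2)^j) * (((n-1-j).factorial:ℝ) * (j.factorial:ℝ))) *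
          Real.exp (-(|x|/h₁)) := by
          simp only [abs_zero, zero_div, neg_zero, Real.exp_zero]
          ring
      _ ≤ (M₁ * M₂) * (((h/2)^(n-1-j) * (h/2)^j) * ((n-1).factorial:ℝ)) *
          Real.exp (-(|x|/h₁)) := by
          apply mul_le_mul_of_nonneg_right _ (Real.exp_nonneg _)
          apply mul_le_mul_of_nonneg_left _ hA
          exact mul_le_mul (mul_le_mul_of_nonneg_right hpk (by positivity)) hfac
            (by positivity) (by positivity)
      _ = (M₁ * M₂) * ((h/2)^(n-1) * ((n-1).factorial:ℝ)) * Real.exp (-(|x|/h₁)) := by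
          rw [← pow_add, hkj]
      _ ≤ M₁ * M₂ * ((h/2)^(n-1) * ((n-1).factorial:ℝ)) * Real.exp (-(|x|/h)) := by
          apply mul_le_mul_of_nonneg_left hexp1
          have : (0:ℝ) ≤ (h/2)^(n-1) := by positivity
          positivity
  have hsum : ‖∑ j ∈ Finset.range n, iteratedDeriv (n-1-j) φ x * iteratedDeriv j ψ 0‖ ≤
      (n:ℝ) * (M₁ * M₂ * ((h/2)^(n-1) * ((n-1).factorial:ℝ)) * Real.exp (-(|x|/h))) := by
    calc ‖∑ j ∈ Finset.range n, iteratedDeriv (n-1-j) φ x * iteratedDeriv j ψ 0‖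
        ≤ ∑ j ∈ Finset.range n, ‖iteratedDeriv (n-1-j) φ x * iteratedDeriv j ψ 0‖ :=
          norm_sum_le _ _
      _ ≤ ∑ _j ∈ Finset.range n,
          (M₁ * M₂ * ((h/2)^(n-1) * ((n-1).factorial:ℝ)) * Real.exp (-(|x|/h))) :=
          Finset.sum_le_sum hterm
      _ = (n:ℝ) * _ := by rw [Finset.sum_const, Finset.card_range, nsmul_eq_mul]
  have harith : (n:ℝ) * ((h/2)^(n-1) * ((n-1).factorial:ℝ)) ≤ (1/h) * h^n * (n.factorial:ℝ) := by
    rcases n with _ | m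
    · simp only [Nat.cast_zero, zero_mul]
      positivity
    · push_cast [Nat.add_sub_cancel, Nat.factorial_succ]
      have hp : (h/2)^m ≤ h^m := pow_le_pow_left₀ (by linarith) (by linarith) m
      have e : 1/h * h^(m+1) = h^m := by field_simp [pow_succ]; ring
      rw [e]
      have h5 : (h/2)^m * (m.factorial:ℝ) ≤ h^m * (m.factorial:ℝ) :=
        mul_le_mul_of_nonneg_right hp (Nat.cast_nonneg _)
      nlinarith [h5, (Nat.cast_nonneg m : (0:ℝ) ≤ (m:ℝ))]
  have key1 : ‖∑ j ∈ Finset.range n, iteratedDeriv (n-1-j) φ x * iteratedDeriv j ψ 0‖ * E ≤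
      M₁ * M₂ * (1/h) * h^n * (n.factorial:ℝ) := by
    calc ‖∑ j ∈ Finset.range n, iteratedDeriv (n-1-j) φ x * iteratedDeriv j ψ 0‖ * E
        ≤ ((n:ℝ) * (M₁ * M₂ * ((h/2)^(n-1) * ((n-1).factorial:ℝ)) * Real.exp (-(|x|/h)))) * E :=
          mul_le_mul_of_nonneg_right hsum hE0
      _ = ((n:ℝ) * (M₁ * M₂ * ((h/2)^(n-1) * ((n-1).factorial:ℝ)))) * (Real.exp (-(|x|/h)) * E) := by
          ring
      _ = (M₁ * M₂) * ((n:ℝ) * ((h/2)^(n-1) * ((n-1).factorial:ℝ))) := by rw [eE]; ring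
      _ ≤ (M₁ * M₂) * ((1/h) * h^n * (n.factorial:ℝ)) := mul_le_mul_of_nonneg_left harith hA
      _ = M₁ * M₂ * (1/h) * h^n * (n.factorial:ℝ) := by ring
  -- the integral term
  have hpt : ∀ t ∈ Set.uIoc (0:ℝ) x, ‖φ t * iteratedDeriv n ψ (x - t)‖ ≤
      M₁ * M₂ * ((h/2)^n * (n.factorial:ℝ)) * Real.exp (-(2*|x|)/h) := by
    intro t ht
    rw [norm_mul]
    have b1 : ‖φ t‖ ≤ M₁ * Real.exp (-(|t|/h₁)) := by simpa using hφb 0 t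
    have b2 := hψb n (x - t)
    have hexp2 : Real.exp (-(|t|/h₁)) * Real.exp (-(|x-t|/(h/2))) ≤ Real.exp (-(2*|x|)/h) := by
      rw [← Real.exp_add]
      apply Real.exp_le_exp.2
      have ht1 : 2*|t|/h ≤ |t|/h₁ := by
        rw [div_le_div_iff₀ h0 hh₁]
        nlinarith [abs_nonneg t]
      have ht2 : |x - t|/(h/2) = 2*|x-t|/h := by field_simp
      have ht3 : |x| ≤ |t| + |x - t| := by
        calc |x| = |t + (x - t)| := by ring_nf
          _ ≤ |t| + |x - t| := abs_add_le _ _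
      have s1 : 2*|x|/h ≤ (2*|t| + 2*|x-t|)/h :=
        (div_le_div_iff_of_pos_right h0).2 (by linarith)
      have s2 : (2*|t| + 2*|x-t|)/h = 2*|t|/h + 2*|x-t|/h := by ring
      rw [ht2]
      have : -(2*|x|)/h = -(2*|x|/h) := by ring
      rw [this]
      linarith
    calc ‖φ t‖ * ‖iteratedDeriv n ψ (x - t)‖
        ≤ (M₁ * Real.exp (-(|t|/h₁))) *
          (M₂ * (h/2)^n * (n.factorial:ℝ) * Real.exp (-(|x-t|/(h/2)))) :=
          mul_le_mul b1 b2 (norm_nonneg _) (mul_nonneg hM₁0 (Real.exp_nonneg _))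
      _ = M₁ * M₂ * ((h/2)^n * (n.factorial:ℝ)) *
          (Real.exp (-(|t|/h₁)) * Real.exp (-(|x-t|/(h/2)))) := by ring
      _ ≤ M₁ * M₂ * ((h/2)^n * (n.factorial:ℝ)) * Real.exp (-(2*|x|)/h) := by
          apply mul_le_mul_of_nonneg_left hexp2
          have : (0:ℝ) ≤ (h/2)^n := by positivity
          positivity
  have hIle : ‖∫ t in (0:ℝ)..x, φ t * iteratedDeriv n ψ (x - t)‖ ≤
      (M₁ * M₂ * ((h/2)^n * (n.factorial:ℝ)) * Real.exp (-(2*|x|)/h)) * |x - 0| :=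
    intervalIntegral.norm_integral_le_of_norm_le_const hpt
  have hxe : |x| * Real.exp (-(|x|/h)) ≤ h := by
    have hex := Real.add_one_le_exp (|x|/h)
    rw [Real.exp_neg, mul_inv_le_iff₀' (Real.exp_pos _)]
    calc |x| = (|x|/h) * h := by field_simp
      _ ≤ Real.exp (|x|/h) * h := mul_le_mul_of_nonneg_right (by linarith) h0.le
  have key2 : ‖∫ t in (0:ℝ)..x, φ t * iteratedDeriv n ψ (x - t)‖ * E ≤
      M₁ * M₂ * h * h^n * (n.factorial:ℝ) := by
    have epE : Real.exp (-(2*|x|)/h) * E = Real.exp (-(|x|/h)) := by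
      rw [hE, ← Real.exp_add]
      congr 1
      ring
    calc ‖∫ t in (0:ℝ)..x, φ t * iteratedDeriv n ψ (x - t)‖ * E
        ≤ ((M₁ * M₂ * ((h/2)^n * (n.factorial:ℝ)) * Real.exp (-(2*|x|)/h)) * |x - 0|) * E :=
          mul_le_mul_of_nonneg_right hIle hE0
      _ = M₁ * M₂ * ((h/2)^n * (n.factorial:ℝ)) * (|x| * (Real.exp (-(2*|x|)/h) * E)) := by
          rw [sub_zero]; ring
      _ = M₁ * M₂ * ((h/2)^n * (n.factorial:ℝ)) * (|x| * Real.exp (-(|x|/h))) := by rw [epE]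
      _ ≤ M₁ * M₂ * ((h/2)^n * (n.factorial:ℝ)) * h := by
          apply mul_le_mul_of_nonneg_left hxe
          have : (0:ℝ) ≤ (h/2)^n := by positivity
          positivity
      _ ≤ M₁ * M₂ * h * h^n * (n.factorial:ℝ) := by
          have hp : (h/2)^n ≤ h^n := pow_le_pow_left₀ (by linarith) (by linarith) n
          have h6 : (h/2)^n * (n.factorial:ℝ) ≤ h^n * (n.factorial:ℝ) :=
            mul_le_mul_of_nonneg_right hp (Nat.cast_nonneg _)
          calc M₁ * M₂ * ((h/2)^n * (n.factorial:ℝ)) * h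
              = (M₁ * M₂ * h) * ((h/2)^n * (n.factorial:ℝ)) := by ring
            _ ≤ (M₁ * M₂ * h) * (h^n * (n.factorial:ℝ)) :=
                mul_le_mul_of_nonneg_left h6 (mul_nonneg hA h0.le)
            _ = M₁ * M₂ * h * h^n * (n.factorial:ℝ) := by ring
  calc ‖(∑ j ∈ Finset.range n, iteratedDeriv (n-1-j) φ x * iteratedDeriv j ψ 0) +
        ∫ t in (0:ℝ)..x, φ t * iteratedDeriv n ψ (x - t)‖ * E
      ≤ (‖∑ j ∈ Finset.range n, iteratedDeriv (n-1-j) φ x * iteratedDeriv j ψ 0‖ +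
        ‖∫ t in (0:ℝ)..x, φ t * iteratedDeriv n ψ (x - t)‖) * E :=
        mul_le_mul_of_nonneg_right (norm_add_le _ _) hE0
    _ = ‖∑ j ∈ Finset.range n, iteratedDeriv (n-1-j) φ x * iteratedDeriv j ψ 0‖ * E +
        ‖∫ t in (0:ℝ)..x, φ t * iteratedDeriv n ψ (x - t)‖ * E := by ring
    _ ≤ M₁ * M₂ * (1/h) * h^n * (n.factorial:ℝ) + M₁ * M₂ * h * h^n * (n.factorial:ℝ) :=
        add_le_add key1 key2
    _ = M₁ * M₂ * (h + 1/h) * h^n * (n.factorial:ℝ) := by ring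
end
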